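/- Let S = ({a,b,c}, φ, {a}) with φ(a) = abaca, φ(b) = aba, φ(c) = aba. Define u₁ = aca, u_{n+1} = u₁·φ(u_n) and v₁ = aba, v_{n+1} = v₁·φ(v_n). Then for all n ≥ 1: u_n ≠ v_n, φ(u_n) = φ(v_n), and u_n, v_n ∈ L(S). Consequently, S is not eventually injective (the set Δ_S = {{u,v} ⊆ L(S) : u ≠ v, φ(u) = φ(v)} is infinite). -/
import Mathlib


/-- The morphism on words induced by a map on letters. -/
def applyM {A B : Type*} (f : A → List B) (w : List A) : List B := (w.map f).flatten

/-- `wpow u n` is the word `u` repeated `n` times. -/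
def wpow {A : Type*} (u : List A) (n : ℕ) : List A := (List.replicate n u).flatten

/-- A word is primitive if it is nonempty and not a proper power. -/
def Primitive {A : Type*} (w : List A) : Prop := w ≠ [] ∧ ∀ u n, w = wpow u n → n = 1

/-- Conjugacy of words. -/
def Conj {A : Type*} (u v : List A) : Prop := ∃ x y, u = x ++ y ∧ v = y ++ x

/-- The language of a D(F)0L system with (iterated) morphism `g` and axiom set `W`:
all factors of all `g^[n] w`, `w ∈ W`. -/
def LangG {A : Type*} (g : List A → List A) (W : Set (List A)) : Set (List A) :=
  {u | ∃ n : ℕ, ∃ w ∈ W, u <:+: g^[n] w}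

/-- `(s, w, t)` is an interpretation of `u`: `w` is in the language and `g w = s ++ u ++ t`. -/
def Interp {A : Type*} (g : List A → List A) (L : Set (List A)) (s w t u : List A) : Prop :=
  w ∈ L ∧ g w = s ++ u ++ t

/-- The pair `(u₁, u₂)` is compatible with the interpretation `(s, w, t)` of `u₁ ++ u₂`. -/
def Compatible {A : Type*} (g : List A → List A) (s w t u₁ u₂ : List A) : Prop :=
  ∃ w₁ w₂, w = w₁ ++ w₂ ∧ g w₁ = s ++ u₁ ∧ g w₂ = u₂ ++ t

/-- Weakly synchronizing pair: compatible with all interpretations of `u₁ ++ u₂`. -/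
def WeakSync {A : Type*} (g : List A → List A) (L : Set (List A)) (u₁ u₂ : List A) : Prop :=
  ∀ s w t, Interp g L s w t (u₁ ++ u₂) → Compatible g s w t u₁ u₂

/-- Strongly synchronizing pair. -/
def StrongSync {A : Type*} (g : List A → List A) (L : Set (List A)) (u₁ u₂ : List A) : Prop :=
  u₁ ≠ [] ∧ ∃ a : A, ∀ s w t, Interp g L s w t (u₁ ++ u₂) →
    ∃ w₁ w₂, w = w₁ ++ w₂ ∧ g w₁ = s ++ u₁ ∧ g w₂ = u₂ ++ t ∧ w₁.getLast? = some a

/-- A word is weakly synchronized if some factorization of it is weakly synchronizing. -/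
def WeaklySynchronized {A : Type*} (g : List A → List A) (L : Set (List A)) (u : List A) : Prop :=
  ∃ u₁ u₂, u = u₁ ++ u₂ ∧ WeakSync g L u₁ u₂

/-- An admissible pair: compatible with at least one interpretation. -/
def Admissible {A : Type*} (g : List A → List A) (L : Set (List A)) (u₁ u₂ : List A) : Prop :=
  ∃ s w t, Interp g L s w t (u₁ ++ u₂) ∧ Compatible g s w t u₁ u₂

/-- A word is bounded if the lengths of its iterated images stay bounded. -/
def BoundedWord {A : Type*} (f : A → List A) (w : List A) : Prop :=
  ∃ C, ∀ k : ℕ, ((applyM f)^[k] w).length ≤ C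

/-- `Ω(S)`: primitive words all of whose powers belong to the language. -/
def Omega {A : Type*} (f : A → List A) (W : Set (List A)) : Set (List A) :=
  {v | v ∈ LangG (applyM f) W ∧ Primitive v ∧ ∀ k : ℕ, wpow v k ∈ LangG (applyM f) W}

/-- Minimal interpretation: `|s| < |f(first letter of w)|` and `|t| < |f(last letter of w)|`. -/
def MinInterp {A : Type*} (f : A → List A) (L : Set (List A)) (s w t u : List A) : Prop :=
  Interp (applyM f) L s w t u ∧ w ≠ [] ∧
    (∀ a, w.head? = some a → s.length < (f a).length) ∧
    (∀ b, w.getLast? = some b → t.length < (f b).length)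

inductive ABC : Type | a | b | c
deriving DecidableEq

open ABC in
def φ13 : ABC → List ABC
  | a => [a, b, a, c, a]
  | b => [a, b, a]
  | c => [a, b, a]

open ABC in
def useq : ℕ → List ABC
  | 0 => [a, c, a]
  | n + 1 => [a, c, a] ++ applyM φ13 (useq n)

open ABC in
def vseq : ℕ → List ABC
  | 0 => [a, b, a]
  | n + 1 => [a, b, a] ++ applyM φ13 (vseq n)


open ABC

lemma applyM_append' {A B : Type*} (f : A → List B) (u v : List A) :
    applyM f (u ++ v) = applyM f u ++ applyM f v := by
  simp [applyM]

lemma applyM_infix' {A B : Type*} (f : A → List B) {u v : List A} (h : u <:+: v) :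
    applyM f u <:+: applyM f v := by
  obtain ⟨s, t, rfl⟩ := h
  exact ⟨applyM f s, applyM f t, by simp [applyM_append']⟩

lemma phi_eq13 : ∀ n, applyM φ13 (useq n) = applyM φ13 (vseq n) := by
  intro n
  induction n with
  | zero => rfl
  | succ n ih =>
    show applyM φ13 ([a,c,a] ++ applyM φ13 (useq n)) =
      applyM φ13 ([a,b,a] ++ applyM φ13 (vseq n))
    rw [applyM_append', applyM_append', ih]
    rfl

lemma useq_ne13 (n : ℕ) : useq n ≠ vseq n := by
  obtain ⟨t1, e1⟩ : ∃ t, useq n = a :: c :: t := by cases n <;> exact ⟨_, rfl⟩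
  obtain ⟨t2, e2⟩ : ∃ t, vseq n = a :: b :: t := by cases n <;> exact ⟨_, rfl⟩
  intro h
  rw [e1, e2] at h
  simp at h

lemma keyU13 (w : List ABC) :
    applyM φ13 (applyM φ13 ([a,b] ++ w)) =
      [a,b,a,c,a,a,b,a,a,b,a,c,a,a,b,a] ++
        ([a,b] ++ ([a,c,a] ++ applyM φ13 ([a,c,a] ++ applyM φ13 w))) := by
  simp [applyM, φ13]

lemma keyV13 (w : List ABC) :
    applyM φ13 (applyM φ13 ([c,a] ++ w)) =
      [a,b,a,c,a,a,b,a,a,b,a,c,a,a,b,a] ++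
        ([c,a] ++ ([a,b,a] ++ applyM φ13 ([a,b,a] ++ applyM φ13 w))) := by
  simp [applyM, φ13]

lemma memU13 : ∀ n : ℕ, ∃ m, ([a,b] ++ useq n) <:+: (applyM φ13)^[m] [a] := by
  intro n
  induction n using Nat.twoStepInduction with
  | zero => exact ⟨1, by decide⟩
  | one => exact ⟨3, by decide⟩
  | more n ih _ =>
    obtain ⟨m, hm⟩ := ih
    refine ⟨m + 2, ?_⟩
    have h1 : [a,b] ++ useq (n+2) <:+:
        applyM φ13 (applyM φ13 ([a,b] ++ useq n)) := by
      rw [keyU13]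
      exact ⟨[a,b,a,c,a,a,b,a,a,b,a,c,a,a,b,a], [], by simp [useq]⟩
    have h2 : applyM φ13 (applyM φ13 ([a,b] ++ useq n)) <:+:
        (applyM φ13)^[m+2] [a] := by
      rw [Function.iterate_succ_apply', Function.iterate_succ_apply']
      exact applyM_infix' _ (applyM_infix' _ hm)
    exact h1.trans h2

lemma memV13 : ∀ n : ℕ, ∃ m, ([c,a] ++ vseq n) <:+: (applyM φ13)^[m] [a] := by
  intro n
  induction n using Nat.twoStepInduction with
  | zero => exact ⟨2, by decide⟩
  | one => exact ⟨3, by decide⟩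
  | more n ih _ =>
    obtain ⟨m, hm⟩ := ih
    refine ⟨m + 2, ?_⟩
    have h1 : [c,a] ++ vseq (n+2) <:+:
        applyM φ13 (applyM φ13 ([c,a] ++ vseq n)) := by
      rw [keyV13]
      exact ⟨[a,b,a,c,a,a,b,a,a,b,a,c,a,a,b,a], [], by simp [vseq]⟩
    have h2 : applyM φ13 (applyM φ13 ([c,a] ++ vseq n)) <:+:
        (applyM φ13)^[m+2] [a] := by
      rw [Function.iterate_succ_apply', Function.iterate_succ_apply']
      exact applyM_infix' _ (applyM_infix' _ hm)
    exact h1.trans h2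

lemma useq_memL (n : ℕ) : useq n ∈ LangG (applyM φ13) {[a]} := by
  obtain ⟨m, hm⟩ := memU13 n
  have h0 : useq n <:+: [a,b] ++ useq n := ⟨[a,b], [], by simp⟩
  exact ⟨m, [a], rfl, h0.trans hm⟩

lemma vseq_memL (n : ℕ) : vseq n ∈ LangG (applyM φ13) {[a]} := by
  obtain ⟨m, hm⟩ := memV13 n
  have h0 : vseq n <:+: [c,a] ++ vseq n := ⟨[c,a], [], by simp⟩
  exact ⟨m, [a], rfl, h0.trans hm⟩

lemma applyM_len_le13 (w : List ABC) : w.length ≤ (applyM φ13 w).length := by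
  induction w with
  | nil => simp [applyM]
  | cons x w ih =>
    have hx : 1 ≤ (φ13 x).length := by cases x <;> simp [φ13]
    simp only [applyM, List.map_cons, List.flatten_cons, List.length_append,
      List.length_cons] at *
    omega

lemma useq_len_lt13 (n : ℕ) : (useq n).length < (useq (n+1)).length := by
  have h := applyM_len_le13 (useq n)
  show _ < ([a,c,a] ++ applyM φ13 (useq n)).length
  simp only [List.length_append, List.length_cons, List.length_nil]
  omega

lemma useq_inj13 : Function.Injective useq := by
  have h : StrictMono (fun n => (useq n).length) :=
    strictMono_nat_of_lt_succ useq_len_lt13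
  intro m n e
  exact h.injective (congrArg List.length e)


open ABC in
theorem stmt13 :
    (∀ n : ℕ, useq n ≠ vseq n ∧ applyM φ13 (useq n) = applyM φ13 (vseq n) ∧
      useq n ∈ LangG (applyM φ13) {[a]} ∧ vseq n ∈ LangG (applyM φ13) {[a]}) ∧
    {p : List ABC × List ABC | p.1 ∈ LangG (applyM φ13) {[a]} ∧
      p.2 ∈ LangG (applyM φ13) {[a]} ∧ p.1 ≠ p.2 ∧
      applyM φ13 p.1 = applyM φ13 p.2}.Infinite := by
  constructor
  · intro n
    exact ⟨useq_ne13 n, phi_eq13 n, useq_memL n, vseq_memL n⟩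
  · apply Set.infinite_of_injective_forall_mem
      (f := fun n : ℕ => (useq n, vseq n))
    · intro m n h
      exact useq_inj13 (congrArg Prod.fst h)
    · intro n
      exact ⟨useq_memL n, vseq_memL n, useq_ne13 n, phi_eq13 n⟩
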